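/- Let w : ℝ → ℝ be defined by w(0) = 1 and w(t) = (√(1+48t) − 1)/(24t) for t ≠ 0, and define F₂(t) = w(t) · ( −14·(2−w(t))^{−4} + (700/9)·(2−w(t))^{−5} − (1540/9)·(2−w(t))^{−6} + (560/3)·(2−w(t))^{−7} − (910/9)·(2−w(t))^{−8} + (196/9)·(2−w(t))^{−9} ). Then for every natural number j, (−1)^j times the j-th iterated derivative of F₂ at 0 equals 12^j · j(j−1)(j−2) · ( ((2j)!/j!)·(7(2j+3)/1080) − 4^j·j!·(7/384) ). -/

import Mathlib

/-!
With `s = √(1 + 48 t)` the branch is `w = 2 / (s + 1)`, so `2 - w = 2 s / (s + 1)` and `z₂ (w t)`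
is a polynomial of degree 9 without constant term in `s⁻¹ = (1 + 48 t) ^ (-1/2)`. The `j`-th
derivative of `(1 + 48 t) ^ (-e)` at `0` is `(-48) ^ j` times the rising factorial `(e)_j`.
For the odd powers `e = 1/2 + k`, and `(1/2 + k)_j = (1/2)_j (1/2 + j)_k / (1/2)_k` with
`4 ^ j j! (1/2)_j = (2j)!`; for the even powers `e = 1 + k`, and `(1 + k)_j = j! (1 + j)_k / k!`.
So each parity contributes a fixed Pochhammer factor times a polynomial in `j`, namely
`7 j(j-1)(j-2)(2j+3)/1080` and `-7 j(j-1)(j-2)/384`.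
-/

open Nat Finset Filter Topology Polynomial

theorem rpow_neg_half_natCast {y : ℝ} (hy : 0 < y) (n : ℕ) :
    y ^ (-((n : ℝ) / 2)) = 1 / √y ^ n := by
  rw [Real.rpow_neg hy.le, Real.sqrt_eq_rpow, ← Real.rpow_natCast, ← Real.rpow_mul hy.le,
    one_div_mul_eq_div, one_div]

theorem iteratedDeriv_one_add_mul_rpow {c : ℝ} (hc : 0 < c) (r : ℝ) (j : ℕ) :
    iteratedDeriv j (fun x => (1 + c * x) ^ r) 0 = c ^ j * (descPochhammer ℝ j).eval r := by
  have hscale : (fun x : ℝ => (1 + c * x) ^ r) =ᶠ[𝓝 0] fun x => c ^ r * (c⁻¹ + x) ^ r := by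
    filter_upwards [eventually_gt_nhds (neg_lt_zero.2 (inv_pos.2 hc))] with x hx
    rw [← Real.mul_rpow hc.le (by linarith), mul_add, mul_inv_cancel₀ hc.ne']
  rw [hscale.iteratedDeriv_eq, iteratedDeriv_const_mul_field,
    iteratedDeriv_comp_const_add j (fun y : ℝ => y ^ r), iteratedDeriv_eq_iterate]
  dsimp only
  rw [Real.iter_deriv_rpow_const, add_zero, Real.inv_rpow hc.le, ← Real.rpow_neg hc.le,
    mul_left_comm, ← Real.rpow_add hc, neg_sub, add_sub_cancel, Real.rpow_natCast, mul_comm]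

theorem contDiffAt_one_add_mul_rpow (c r : ℝ) {n : WithTop ℕ∞} :
    ContDiffAt ℝ n (fun x : ℝ => (1 + c * x) ^ r) 0 :=
  (contDiffAt_const.add (contDiffAt_const.mul contDiffAt_id)).rpow_const_of_ne (by simp)

theorem neg_one_pow_mul_iteratedDeriv_sum_one_add_mul_rpow_neg {ι : Type*} (s : Finset ι)
    (b e : ι → ℝ) {c : ℝ} (hc : 0 < c) (j : ℕ) :
    (-1) ^ j * iteratedDeriv j (fun x => ∑ i ∈ s, b i * (1 + c * x) ^ (-e i)) 0 =
      c ^ j * ∑ i ∈ s, b i * (ascPochhammer ℝ j).eval (e i) := by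
  rw [iteratedDeriv_fun_sum fun i _ => contDiffAt_const.mul (contDiffAt_one_add_mul_rpow c _),
    mul_sum, mul_sum]
  refine sum_congr rfl fun i _ => ?_
  rw [iteratedDeriv_const_mul_field, iteratedDeriv_one_add_mul_rpow hc,
    ← neg_neg (e i), ascPochhammer_eval_neg_eq_descPochhammer, neg_neg]
  ring

theorem ascPochhammer_eval_add_natCast_mul {R : Type*} [CommSemiring R] (a : R) (j n : ℕ) :
    (ascPochhammer R j).eval (a + n) * (ascPochhammer R n).eval a =
      (ascPochhammer R j).eval a * (ascPochhammer R n).eval (a + j) := by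
  have h := congrArg (eval a) ((ascPochhammer_mul R n j).trans
    (add_comm n j ▸ (ascPochhammer_mul R j n).symm))
  simp only [eval_mul, eval_comp, eval_add, eval_X, eval_natCast] at h
  rw [mul_comm, h, mul_comm]

theorem ascPochhammer_eval_add_natCast {a : ℝ} (ha : 0 < a) (j n : ℕ) :
    (ascPochhammer ℝ j).eval (a + n) =
      (ascPochhammer ℝ j).eval a * (ascPochhammer ℝ n).eval (a + j) /
        (ascPochhammer ℝ n).eval a :=
  eq_div_of_mul_eq (ascPochhammer_pos n a ha).ne' (ascPochhammer_eval_add_natCast_mul a j n)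

theorem four_pow_mul_factorial_mul_ascPochhammer_eval_half (j : ℕ) :
    4 ^ j * (j ! : ℝ) * (ascPochhammer ℝ j).eval (1 / 2) = (2 * j)! := by
  induction j with
  | zero => simp
  | succ j ih =>
    rw [ascPochhammer_succ_eval, show 2 * (j + 1) = 2 * j + 1 + 1 by ring, factorial_succ,
      factorial_succ, factorial_succ]
    push_cast
    rw [← ih]
    ring

noncomputable def z₂ (z : ℝ) : ℝ :=
  z * (-14 * (2 - z) ^ (-4 : ℤ) + (700 / 9) * (2 - z) ^ (-5 : ℤ)
    - (1540 / 9) * (2 - z) ^ (-6 : ℤ) + (560 / 3) * (2 - z) ^ (-7 : ℤ)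
    - (910 / 9) * (2 - z) ^ (-8 : ℤ) + (196 / 9) * (2 - z) ^ (-9 : ℤ))

noncomputable def z₂OddCoeff : Fin 5 → ℝ := ![-7/288, -7/576, 35/192, -133/576, 49/576]

noncomputable def z₂EvenCoeff : Fin 4 → ℝ := ![7/64, -21/64, 21/64, -7/64]

theorem z₂_two_div_add_one {s : ℝ} (hs : 0 < s) :
    z₂ (2 / (s + 1)) = ∑ k : Fin 5, z₂OddCoeff k / s ^ (2 * (k : ℕ) + 1)
      + ∑ k : Fin 4, z₂EvenCoeff k / s ^ (2 * (k : ℕ) + 2) := by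
  have h2 : 2 - 2 / (s + 1) = 2 * s / (s + 1) := by field_simp; ring
  simp only [z₂, h2, Fin.sum_univ_five, Fin.sum_univ_four, z₂OddCoeff, z₂EvenCoeff, Matrix.cons_val,
    Fin.isValue, Fin.coe_ofNat_eq_mod, Nat.reduceMod, zpow_neg, zpow_ofNat]
  field_simp
  ring

theorem sum_z₂OddCoeff_mul_ascPochhammer_eval (j : ℕ) :
    ∑ k, z₂OddCoeff k * (ascPochhammer ℝ j).eval ((1 / 2 : ℝ) + (k : ℕ)) =
      (ascPochhammer ℝ j).eval (1 / 2) * (j * (j - 1) * (j - 2) * (7 * (2 * j + 3) / 1080)) := by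
  simp only [ascPochhammer_eval_add_natCast one_half_pos j, Fin.sum_univ_five, z₂OddCoeff,
    Matrix.cons_val, Fin.isValue, Fin.coe_ofNat_eq_mod, Nat.reduceMod, ascPochhammer_succ_eval,
    ascPochhammer_zero, eval_one]
  push_cast
  ring

theorem sum_z₂EvenCoeff_mul_ascPochhammer_eval (j : ℕ) :
    ∑ k, z₂EvenCoeff k * (ascPochhammer ℝ j).eval ((1 : ℝ) + (k : ℕ)) =
      -(j ! * (j * (j - 1) * (j - 2) * (7 / 384))) := by
  simp only [ascPochhammer_eval_add_natCast one_pos j, Fin.sum_univ_four, z₂EvenCoeff,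
    Matrix.cons_val, Fin.isValue, Fin.coe_ofNat_eq_mod, Nat.reduceMod, ascPochhammer_succ_eval,
    ascPochhammer_zero, eval_one, ascPochhammer_eval_one]
  push_cast
  ring

theorem eq_two_div_sqrt_add_one {w : ℝ → ℝ} (hw0 : w 0 = 1)
    (hw : ∀ t : ℝ, t ≠ 0 → w t = (Real.sqrt (1 + 48 * t) - 1) / (24 * t))
    {t : ℝ} (ht : 0 < 1 + 48 * t) : w t = 2 / (√(1 + 48 * t) + 1) := by
  rcases eq_or_ne t 0 with rfl | ht0
  · norm_num [hw0]
  have hs : √(1 + 48 * t) ^ 2 = 1 + 48 * t := Real.sq_sqrt ht.le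
  have hs1 : √(1 + 48 * t) + 1 ≠ 0 := by positivity
  rw [hw t ht0, div_eq_div_iff (by simpa using ht0) hs1]
  linear_combination hs

theorem z₂_comp_eventuallyEq_sum_rpow {w : ℝ → ℝ} (hw0 : w 0 = 1)
    (hw : ∀ t : ℝ, t ≠ 0 → w t = (Real.sqrt (1 + 48 * t) - 1) / (24 * t)) :
    (fun t => z₂ (w t)) =ᶠ[𝓝 0] fun x =>
      ∑ k : Fin 5, z₂OddCoeff k * (1 + 48 * x) ^ (-((1 / 2 : ℝ) + (k : ℕ)))
        + ∑ k : Fin 4, z₂EvenCoeff k * (1 + 48 * x) ^ (-((1 : ℝ) + (k : ℕ))) := by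
  filter_upwards [eventually_gt_nhds (show (-1 / 48 : ℝ) < 0 by norm_num)] with x hx
  replace hx : 0 < 1 + 48 * x := by linarith
  rw [eq_two_div_sqrt_add_one hw0 hw hx, z₂_two_div_add_one (Real.sqrt_pos.2 hx)]
  congr 1 <;> refine sum_congr rfl fun k _ => ?_
  · rw [show (1 / 2 : ℝ) + (k : ℕ) = ((2 * (k : ℕ) + 1 : ℕ) : ℝ) / 2 by push_cast; ring,
      rpow_neg_half_natCast hx, mul_one_div]
  · rw [show (1 : ℝ) + (k : ℕ) = ((2 * (k : ℕ) + 2 : ℕ) : ℝ) / 2 by push_cast; ring,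
      rpow_neg_half_natCast hx, mul_one_div]

/-- Count of 2-legged 4-valent genus-2 maps (g = 2 row of Table 1): with `w` the branch
of the string equation `1 = w + 12 t w²` with `w(0) = 1`, and `F₂(t) = z₂(w(t))`,
`(-1)^j F₂^{(j)}(0) = 12^j j(j-1)(j-2) ((2j)!/j! · 7(2j+3)/1080 - 4^j j! · 7/384)`. -/
theorem two_legged_genus_two_counts
    (w : ℝ → ℝ) (hw0 : w 0 = 1)
    (hw : ∀ t : ℝ, t ≠ 0 → w t = (Real.sqrt (1 + 48 * t) - 1) / (24 * t))
    (F₂ : ℝ → ℝ)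
    (hF₂ : F₂ = fun t => w t *
      (-14 * (2 - w t) ^ (-4 : ℤ) + (700 / 9) * (2 - w t) ^ (-5 : ℤ)
        - (1540 / 9) * (2 - w t) ^ (-6 : ℤ) + (560 / 3) * (2 - w t) ^ (-7 : ℤ)
        - (910 / 9) * (2 - w t) ^ (-8 : ℤ) + (196 / 9) * (2 - w t) ^ (-9 : ℤ))) :
    ∀ j : ℕ, (-1) ^ j * iteratedDeriv j F₂ 0 =
      12 ^ j * (∏ k ∈ Finset.range 3, ((j : ℝ) - (k : ℝ))) *
        (((2 * j)! : ℝ) / (j ! : ℝ) * (7 * (2 * (j : ℝ) + 3) / 1080)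
          - 4 ^ j * (j ! : ℝ) * (7 / 384)) := by
  intro j
  have hsmooth {ι : Type} (s : Finset ι) (b e : ι → ℝ) :
      ContDiffAt ℝ j (fun x => ∑ i ∈ s, b i * (1 + 48 * x) ^ (-e i)) 0 :=
    ContDiffAt.sum fun i _ => contDiffAt_const.mul (contDiffAt_one_add_mul_rpow 48 _)
  rw [show F₂ = fun t => z₂ (w t) from hF₂,
    (z₂_comp_eventuallyEq_sum_rpow hw0 hw).iteratedDeriv_eq,
    iteratedDeriv_fun_add (hsmooth _ _ _) (hsmooth _ _ _), mul_add,
    neg_one_pow_mul_iteratedDeriv_sum_one_add_mul_rpow_neg _ _ _ (by norm_num),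
    neg_one_pow_mul_iteratedDeriv_sum_one_add_mul_rpow_neg _ _ _ (by norm_num),
    sum_z₂OddCoeff_mul_ascPochhammer_eval, sum_z₂EvenCoeff_mul_ascPochhammer_eval,
    ← four_pow_mul_factorial_mul_ascPochhammer_eval_half,
    show (48 : ℝ) ^ j = 12 ^ j * 4 ^ j by rw [← mul_pow]; norm_num]
  simp only [prod_range_succ, prod_range_zero]
  field_simp
  ring
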